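/- (Convergence of block gossip to the average) Let n ≥ 1 and let G be a simple graph on {1,…,n} with edge set E. For an edge e = (i,j) let a_e ∈ ℝⁿ be the vector with +1 in coordinate i, −1 in coordinate j, and 0 elsewhere. Let 𝒮 be a finite collection of subsets of E with probabilities p_S ≥ 0 summing to 1, let P_S be the orthogonal projection onto span{a_e : e ∈ S}, and let λ = inf{∑_S p_S ⟨v, P_S v⟩ : ‖v‖ = 1, ⟨v, 1_n⟩ = 0}. Let c ∈ ℝⁿ, c̄ = (1/n)∑_i c_i, and define the random gossip iterates by x⁰ = c and x^{k+1} = (I − P_{S_k}) x^k with S_k drawn i.i.d. from (p_S). Then for every k ≥ 0: ∑_{s : {1,…,k} → 𝒮} (∏_{i=1}^k p_{s(i)}) ‖(I − P_{s(k)})···(I − P_{s(1)})(c − c̄·1_n)‖² ≤ (1 − λ)^k ‖c − c̄·1_n‖², i.e., E‖x^k − c̄·1_n‖² ≤ (1−λ)^k ‖c − c̄·1_n‖². -/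

import Mathlib

/-! Every `a_e` is orthogonal to `1ₙ`, so each step `x ↦ x - P_S x` preserves `⟨x, 1ₙ⟩ = 0`.
For such `x`, Pythagoras gives `𝔼‖x - P_S x‖² = ‖x‖² - 𝔼⟨x, P_S x⟩`, and by homogeneity
of `v ↦ 𝔼⟨v, P_S v⟩` the definition of `λ` bounds this by `(1 - λ)‖x‖²`. Conditioning on the
first draw and inducting on `k` yields the factor `(1 - λ)^k`. -/

/-- Reinterpret a vector in `ℝⁿ` as an element of the Euclidean space `ℝⁿ`. -/
def toEuc {n : ℕ} (x : Fin n → ℝ) : EuclideanSpace ℝ (Fin n) := WithLp.toLp 2 x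

/-- The vector `a_e ∈ ℝⁿ` attached to an (oriented) edge `e = (i, j)`: `+1` in
coordinate `i`, `−1` in coordinate `j`, and `0` elsewhere. -/
noncomputable def edgeVec {n : ℕ} (e : Fin n × Fin n) : EuclideanSpace ℝ (Fin n) :=
  EuclideanSpace.single e.1 (1 : ℝ) - EuclideanSpace.single e.2 (1 : ℝ)

/-- Orthogonal projection `P_S` onto `span {a_e : e ∈ S}` for a set `S` of edges. -/
noncomputable def edgeProj {n : ℕ} (S : Set (Fin n × Fin n))
    (v : EuclideanSpace ℝ (Fin n)) : EuclideanSpace ℝ (Fin n) :=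
  (Submodule.orthogonalProjectionOnto (Submodule.span ℝ (edgeVec '' S)) v : EuclideanSpace ℝ (Fin n))

open Finset
open scoped InnerProductSpace

section ProjectionIdentities

variable {E : Type*} [NormedAddCommGroup E] [InnerProductSpace ℝ E]
  (K : Submodule ℝ E) [K.HasOrthogonalProjection]

theorem Submodule.real_inner_self_starProjection (v : E) :
    ⟪v, K.starProjection v⟫_ℝ = ‖K.starProjection v‖ ^ 2 := by
  rw [← real_inner_self_eq_norm_sq, ← sub_eq_zero, ← inner_sub_left]
  exact K.starProjection_inner_eq_zero v _ (K.starProjection_apply_mem v)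

theorem Submodule.norm_sub_starProjection_sq (v : E) :
    ‖v - K.starProjection v‖ ^ 2 = ‖v‖ ^ 2 - ⟪v, K.starProjection v⟫_ℝ := by
  rw [norm_sub_sq_real, K.real_inner_self_starProjection]
  ring

end ProjectionIdentities

section RandomIteration

variable {Ω α : Type*} [Fintype Ω] (p : Ω → ℝ) (T : Ω → α → α) (f : α → ℝ)

theorem sum_prod_mul_foldl_succ (k : ℕ) (x : α) :
    ∑ s : Fin (k + 1) → Ω, (∏ i, p (s i)) * f ((List.ofFn s).foldl (fun y ω => T ω y) x) =
      ∑ ω, p ω * ∑ t : Fin k → Ω,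
        (∏ i, p (t i)) * f ((List.ofFn t).foldl (fun y ω => T ω y) (T ω x)) := by
  rw [← (Fin.consEquiv fun _ => Ω).sum_comp, Fintype.sum_prod_type]
  simp only [Fin.consEquiv_apply, Fin.prod_univ_succ, Fin.cons_zero, Fin.cons_succ,
    List.ofFn_succ, List.foldl_cons, mul_sum, mul_assoc]

theorem sum_prod_mul_foldl_le_pow_mul (V : Set α) (hV : ∀ ω, ∀ x ∈ V, T ω x ∈ V)
    (hp : ∀ ω, 0 ≤ p ω) {ρ : ℝ} (hρ : 0 ≤ ρ)
    (hstep : ∀ x ∈ V, ∑ ω, p ω * f (T ω x) ≤ ρ * f x) (k : ℕ) {x : α} (hx : x ∈ V) :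
    ∑ s : Fin k → Ω, (∏ i, p (s i)) * f ((List.ofFn s).foldl (fun y ω => T ω y) x) ≤
      ρ ^ k * f x := by
  induction k generalizing x with
  | zero => simp
  | succ k ih =>
    calc _ = ∑ ω, p ω * ∑ t : Fin k → Ω,
            (∏ i, p (t i)) * f ((List.ofFn t).foldl (fun y ω => T ω y) (T ω x)) :=
          sum_prod_mul_foldl_succ p T f k x
      _ ≤ ∑ ω, p ω * (ρ ^ k * f (T ω x)) := by
          gcongr with ω
          · exact hp ω
          · exact ih (hV ω x hx)
      _ = ρ ^ k * ∑ ω, p ω * f (T ω x) := by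
          rw [mul_sum]
          exact sum_congr rfl fun ω _ => by ring
      _ ≤ ρ ^ k * (ρ * f x) := by gcongr; exact hstep x hx
      _ = ρ ^ (k + 1) * f x := by ring

end RandomIteration

section RayleighInf

variable {E : Type*} [NormedAddCommGroup E] [InnerProductSpace ℝ E]

/-- The paper's `λ`: the infimum of the form `q` over unit vectors orthogonal to `u`
(`0` when there are none, by the convention `sInf ∅ = 0`). -/
noncomputable def rayleighInf (u : E) (q : E → ℝ) : ℝ :=
  sInf {r : ℝ | ∃ v : E, ‖v‖ = 1 ∧ ⟪v, u⟫_ℝ = 0 ∧ r = q v}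

variable {u : E} {q : E → ℝ}

theorem bddBelow_rayleigh (hq0 : ∀ v, 0 ≤ q v) :
    BddBelow {r : ℝ | ∃ v : E, ‖v‖ = 1 ∧ ⟪v, u⟫_ℝ = 0 ∧ r = q v} :=
  ⟨0, by rintro _ ⟨v, -, -, rfl⟩; exact hq0 v⟩

theorem rayleighInf_le_one (hq0 : ∀ v, 0 ≤ q v) (hq1 : ∀ v, q v ≤ ‖v‖ ^ 2) :
    rayleighInf u q ≤ 1 := by
  have hle : ∀ r ∈ {r : ℝ | ∃ v : E, ‖v‖ = 1 ∧ ⟪v, u⟫_ℝ = 0 ∧ r = q v}, r ≤ 1 := by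
    rintro _ ⟨v, hv, -, rfl⟩
    simpa [hv] using hq1 v
  exact (Real.sInf_le_sSup _ (bddBelow_rayleigh hq0) ⟨1, hle⟩).trans
    (Real.sSup_le hle zero_le_one)

theorem rayleighInf_mul_norm_sq_le (hq0 : ∀ v, 0 ≤ q v)
    (hq : ∀ (a : ℝ) v, q (a • v) = a ^ 2 * q v) {w : E} (hw : ⟪w, u⟫_ℝ = 0) :
    rayleighInf u q * ‖w‖ ^ 2 ≤ q w := by
  rcases eq_or_ne w 0 with rfl | hw0
  · simpa using hq0 0
  have hnorm : 0 < ‖w‖ := norm_pos_iff.2 hw0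
  have hunit : q (‖w‖⁻¹ • w) ∈ {r : ℝ | ∃ v : E, ‖v‖ = 1 ∧ ⟪v, u⟫_ℝ = 0 ∧ r = q v} :=
    ⟨‖w‖⁻¹ • w, by simp [norm_smul, hnorm.ne'], by simp [real_inner_smul_left, hw], rfl⟩
  calc rayleighInf u q * ‖w‖ ^ 2 ≤ q (‖w‖⁻¹ • w) * ‖w‖ ^ 2 := by
        gcongr
        exact csInf_le (bddBelow_rayleigh hq0) hunit
    _ = q w := by
        rw [hq]
        field_simp

end RayleighInf

section BlockProjection

variable {E Ω : Type*} [NormedAddCommGroup E] [InnerProductSpace ℝ E] [Fintype Ω]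
  (K : Ω → Submodule ℝ E) [∀ ω, (K ω).HasOrthogonalProjection] (p : Ω → ℝ)

noncomputable def expectedProjForm (v : E) : ℝ :=
  ∑ ω, p ω * ⟪v, (K ω).starProjection v⟫_ℝ

theorem expectedProjForm_smul (a : ℝ) (v : E) :
    expectedProjForm K p (a • v) = a ^ 2 * expectedProjForm K p v := by
  simp only [expectedProjForm, map_smul, real_inner_smul_left, real_inner_smul_right, mul_sum]
  exact sum_congr rfl fun ω _ => by ring

variable {p}

theorem expectedProjForm_nonneg (hp : ∀ ω, 0 ≤ p ω) (v : E) : 0 ≤ expectedProjForm K p v :=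
  sum_nonneg fun ω _ => mul_nonneg (hp ω) <|
    (K ω).real_inner_self_starProjection v ▸ sq_nonneg _

theorem expectedProjForm_le (hp : ∀ ω, 0 ≤ p ω) (v : E) :
    expectedProjForm K p v ≤ (∑ ω, p ω) * ‖v‖ ^ 2 := by
  rw [expectedProjForm, sum_mul]
  gcongr with ω
  · exact hp ω
  · rw [(K ω).real_inner_self_starProjection]
    gcongr
    exact (K ω).norm_starProjection_apply_le v

theorem sum_mul_norm_sub_starProjection_sq (v : E) :
    ∑ ω, p ω * ‖v - (K ω).starProjection v‖ ^ 2 =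
      (∑ ω, p ω) * ‖v‖ ^ 2 - expectedProjForm K p v := by
  simp only [Submodule.norm_sub_starProjection_sq, mul_sub, sum_sub_distrib, sum_mul,
    expectedProjForm]

theorem sum_prod_mul_norm_foldl_sub_starProjection_sq_le (hp : ∀ ω, 0 ≤ p ω)
    (hsum : ∑ ω, p ω = 1) {u : E} (hu : ∀ ω, K ω ≤ (ℝ ∙ u)ᗮ) {w : E} (hw : ⟪w, u⟫_ℝ = 0)
    (k : ℕ) :
    ∑ s : Fin k → Ω, (∏ i, p (s i)) *
        ‖(List.ofFn s).foldl (fun x ω => x - (K ω).starProjection x) w‖ ^ 2 ≤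
      (1 - rayleighInf u (expectedProjForm K p)) ^ k * ‖w‖ ^ 2 := by
  have hq0 := expectedProjForm_nonneg K hp
  have hq1 : ∀ v, expectedProjForm K p v ≤ ‖v‖ ^ 2 := by
    simpa [hsum] using expectedProjForm_le K hp
  refine sum_prod_mul_foldl_le_pow_mul p (fun ω x => x - (K ω).starProjection x) (‖·‖ ^ 2)
    {x | ⟪x, u⟫_ℝ = 0} ?_ hp (sub_nonneg.2 (rayleighInf_le_one hq0 hq1)) ?_ k hw
  · intro ω x (hx : ⟪x, u⟫_ℝ = 0)
    have hPx : ⟪(K ω).starProjection x, u⟫_ℝ = 0 :=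
      Submodule.mem_orthogonal_singleton_iff_inner_left.1
        (hu ω ((K ω).starProjection_apply_mem x))
    show ⟪x - (K ω).starProjection x, u⟫_ℝ = 0
    rw [inner_sub_left, hx, hPx, sub_zero]
  · intro x hx
    have := rayleighInf_mul_norm_sq_le hq0 (expectedProjForm_smul K p) hx
    rw [sum_mul_norm_sub_starProjection_sq, hsum]
    linarith

end BlockProjection

theorem edgeProj_eq_starProjection {n : ℕ} (S : Set (Fin n × Fin n))
    (v : EuclideanSpace ℝ (Fin n)) :
    edgeProj S v = (Submodule.span ℝ (edgeVec '' S)).starProjection v :=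
  rfl

theorem inner_edgeVec_one {n : ℕ} (e : Fin n × Fin n) :
    ⟪edgeVec e, toEuc (fun _ => 1)⟫_ℝ = 0 := by
  simp [edgeVec, toEuc, inner_sub_left, EuclideanSpace.inner_single_left]

theorem span_edgeVec_le_orthogonal_one {n : ℕ} (S : Set (Fin n × Fin n)) :
    Submodule.span ℝ (edgeVec '' S) ≤ (ℝ ∙ toEuc (fun _ => (1 : ℝ)))ᗮ :=
  Submodule.span_le.2 <| by
    rintro _ ⟨e, -, rfl⟩
    exact Submodule.mem_orthogonal_singleton_iff_inner_left.2 (inner_edgeVec_one e)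

theorem inner_sub_mean_smul_one {n : ℕ} (c : EuclideanSpace ℝ (Fin n)) :
    ⟪c - ((∑ i, c i) / n) • toEuc (fun _ => 1), toEuc (fun _ => 1)⟫_ℝ = 0 := by
  have hc : ⟪c, toEuc (fun _ => 1)⟫_ℝ = ∑ i, c i := by
    simp [toEuc, PiLp.inner_apply]
  have hone : ⟪toEuc (fun _ : Fin n => (1 : ℝ)), toEuc (fun _ => 1)⟫_ℝ = n := by
    rw [toEuc, PiLp.inner_apply]
    simp
  rw [inner_sub_left, real_inner_smul_left, hc, hone,
    div_mul_cancel_of_imp fun hn => by obtain rfl := Nat.cast_eq_zero.1 hn; simp, sub_self]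

theorem block_gossip_convergence_general (n : ℕ)
    {Ω : Type*} [Fintype Ω] (S : Ω → Set (Fin n × Fin n))
    (p : Ω → ℝ) (hp : ∀ ω, 0 ≤ p ω) (hsum : ∑ ω, p ω = 1)
    (c : EuclideanSpace ℝ (Fin n)) (k : ℕ) :
    ∑ s : Fin k → Ω, (∏ i, p (s i)) *
        ‖(List.ofFn s).foldl (fun w ω => w - edgeProj (S ω) w)
          (c - ((∑ i, c i) / n) • toEuc (fun _ => 1))‖ ^ 2
      ≤ (1 - sInf {r : ℝ | ∃ v : EuclideanSpace ℝ (Fin n), ‖v‖ = 1 ∧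
            (inner ℝ v (toEuc (fun _ => 1)) : ℝ) = 0 ∧
            r = ∑ ω, p ω * (inner ℝ v (edgeProj (S ω) v) : ℝ)}) ^ k
          * ‖c - ((∑ i, c i) / n) • toEuc (fun _ => 1)‖ ^ 2 := by
  simp only [edgeProj_eq_starProjection]
  exact sum_prod_mul_norm_foldl_sub_starProjection_sq_le
    (fun ω => Submodule.span ℝ (edgeVec '' S ω)) hp hsum
    (fun ω => span_edgeVec_le_orthogonal_one (S ω)) (inner_sub_mean_smul_one c) k

/-- Convergence of block gossip to the average: for edge subsets
`S ω ⊆ E(G)` sampled with probabilities `p ω`, the expected squared distance of the `k`-th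
gossip iterate (started from `x⁰ = c`, with update `x ↦ (I − P_{S ω}) x` applied to
`x − c̄·1ₙ`) to the consensus vector `c̄·1ₙ` decays geometrically:
`E‖x^k − c̄·1ₙ‖² ≤ (1 − λ)^k ‖c − c̄·1ₙ‖²`, where
`λ = inf {∑ ω, p ω ⟨v, P_{S ω} v⟩ : ‖v‖ = 1, ⟨v, 1ₙ⟩ = 0}`. -/
theorem block_gossip_convergence (n : ℕ) (hn : 1 ≤ n) (G : SimpleGraph (Fin n))
    {Ω : Type*} [Fintype Ω] (S : Ω → Set (Fin n × Fin n))
    (hS : ∀ ω : Ω, ∀ e ∈ S ω, G.Adj e.1 e.2)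
    (p : Ω → ℝ) (hp : ∀ ω, 0 ≤ p ω) (hsum : ∑ ω, p ω = 1)
    (c : EuclideanSpace ℝ (Fin n)) (k : ℕ) :
    ∑ s : Fin k → Ω, (∏ i, p (s i)) *
        ‖(List.ofFn s).foldl (fun w ω => w - edgeProj (S ω) w)
          (c - ((∑ i, c i) / n) • toEuc (fun _ => 1))‖ ^ 2
      ≤ (1 - sInf {r : ℝ | ∃ v : EuclideanSpace ℝ (Fin n), ‖v‖ = 1 ∧
            (inner ℝ v (toEuc (fun _ => 1)) : ℝ) = 0 ∧
            r = ∑ ω, p ω * (inner ℝ v (edgeProj (S ω) v) : ℝ)}) ^ k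
          * ‖c - ((∑ i, c i) / n) • toEuc (fun _ => 1)‖ ^ 2 :=
  block_gossip_convergence_general n S p hp hsum c k
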